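/- arXiv:1904.08730 — 12 statements merged into one kernel-verified Lean document; each statement's English description precedes it below -/
import Mathlib

section
/- For each fixed u with 0 < u < 1, the function η(α) = u^α · log(u) / (1 - u^α) is increasing in α on (0, ∞). -/
/-! With `x = u ^ α`, `η = log u * (x / (1 - x))`: a negative multiple of a function increasing
in `x` on `x < 1`, while `x` decreases in `α`. -/

open Real Set

theorem monotoneOn_div_one_sub : MonotoneOn (fun x : ℝ => x / (1 - x)) (Iio 1) := by
  intro x hx y hy hxy
  rw [mem_Iio] at hx hy
  rw [div_le_div_iff₀ (sub_pos.2 hx) (sub_pos.2 hy)]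
  nlinarith

theorem eta_increasing_in_alpha (u : ℝ) (hu0 : 0 < u) (hu1 : u < 1) :
    MonotoneOn (fun α : ℝ => u ^ α * Real.log u / (1 - u ^ α)) (Set.Ioi (0 : ℝ)) := by
  intro a ha b hb hab
  have hpow : u ^ b ≤ u ^ a := rpow_le_rpow_of_exponent_ge hu0 hu1.le hab
  have hratio : u ^ b / (1 - u ^ b) ≤ u ^ a / (1 - u ^ a) :=
    monotoneOn_div_one_sub (rpow_lt_one hu0.le hu1 hb) (rpow_lt_one hu0.le hu1 ha) hpow
  simp only [mul_div_right_comm _ (log u)]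
  exact mul_le_mul_of_nonpos_right hratio (log_neg hu0 hu1).le
end

section
/- For each fixed α > 0, the function u ↦ u^α · log(u) / (1 - u^α) is decreasing in u on (0, 1). -/
/-!
Substituting `t = u ^ α` gives `u ^ α * log u / (1 - u ^ α) = α⁻¹ * (t * log t / (1 - t))`, and
`u ↦ u ^ α` maps `(0, 1)` increasingly onto itself. The derivative of `t * log t / (1 - t)` is
`(log t + 1 - t) / (1 - t) ^ 2`, which is negative because `log t < t - 1` for `t ≠ 1`.
-/

open Real Set

lemma hasDerivAt_mul_log_div_one_sub {t : ℝ} (ht₀ : t ≠ 0) (ht₁ : t ≠ 1) :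
    HasDerivAt (fun t => t * log t / (1 - t)) ((log t + 1 - t) / (1 - t) ^ 2) t :=
  ((hasDerivAt_mul_log ht₀).fun_div ((hasDerivAt_id' t).const_sub 1)
    (sub_ne_zero.mpr ht₁.symm)).congr_deriv (by ring)

lemma strictAntiOn_mul_log_div_one_sub :
    StrictAntiOn (fun t => t * log t / (1 - t)) (Ioo 0 1) := by
  refine strictAntiOn_of_deriv_neg (convex_Ioo 0 1) ?_ ?_
  · intro t ⟨ht₀, ht₁⟩
    exact (hasDerivAt_mul_log_div_one_sub ht₀.ne' ht₁.ne).continuousAt.continuousWithinAt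
  · rw [interior_Ioo]
    intro t ⟨ht₀, ht₁⟩
    rw [(hasDerivAt_mul_log_div_one_sub ht₀.ne' ht₁.ne).deriv]
    have hlog : log t < t - 1 := log_lt_sub_one_of_pos ht₀ ht₁.ne
    exact div_neg_of_neg_of_pos (by linarith) (by nlinarith)

lemma mapsTo_rpow_Ioo_zero_one {α : ℝ} (hα : 0 < α) : MapsTo (· ^ α) (Ioo (0 : ℝ) 1) (Ioo 0 1) :=
  fun _ ⟨hu₀, hu₁⟩ => ⟨rpow_pos_of_pos hu₀ α, rpow_lt_one hu₀.le hu₁ hα⟩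

lemma rpow_mul_log_div_one_sub_rpow {u : ℝ} (hu : 0 < u) {α : ℝ} (hα : α ≠ 0) :
    u ^ α * log u / (1 - u ^ α) = α⁻¹ * (u ^ α * log (u ^ α) / (1 - u ^ α)) := by
  rw [log_rpow hu]
  field_simp

theorem eta_decreasing_in_u (α : ℝ) (hα : 0 < α) :
    AntitoneOn (fun u : ℝ => u ^ α * Real.log u / (1 - u ^ α)) (Set.Ioo (0 : ℝ) 1) := by
  have hcomp : StrictAntiOn (fun u : ℝ => u ^ α * log (u ^ α) / (1 - u ^ α)) (Ioo 0 1) :=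
    strictAntiOn_mul_log_div_one_sub.comp_strictMonoOn
      ((strictMonoOn_rpow_Ici_of_exponent_pos hα).mono
        (Ioo_subset_Ioi_self.trans Ioi_subset_Ici_self))
      (mapsTo_rpow_Ioo_zero_one hα)
  intro u hu v hv huv
  simp only [rpow_mul_log_div_one_sub_rpow hu.1 hα.ne', rpow_mul_log_div_one_sub_rpow hv.1 hα.ne']
  exact mul_le_mul_of_nonneg_left (hcomp.antitoneOn hu hv huv) (inv_pos.mpr hα).le
end

section
/- For each fixed u with 0 < u < 1, the function γ(α) = α(1 - u)u^(α-1) / (1 - u^α) is decreasing in α on (0, ∞). -/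
/-!
With `v = u⁻¹ > 1`, `γ(α) = (1 - u) / u · α / (v ^ α - 1)`, and `(v ^ α - 1) / α` is the slope of
the secant of the convex function `α ↦ v ^ α` from `0`, hence increasing in `α`.
-/

open Set

theorem Real.monotoneOn_rpow_sub_one_div {b : ℝ} (hb : 0 < b) :
    MonotoneOn (fun x : ℝ => (b ^ x - 1) / x) (Ioi 0) := by
  intro x hx y hy hxy
  have h := (convexOn_rpow_left hb).secant_mono (mem_univ 0) (mem_univ x) (mem_univ y)
    (ne_of_gt hx) (ne_of_gt hy) hxy
  simpa only [Real.rpow_zero, sub_zero] using h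

theorem Real.antitoneOn_div_rpow_sub_one {b : ℝ} (hb : 1 < b) :
    AntitoneOn (fun x : ℝ => x / (b ^ x - 1)) (Ioi 0) := by
  intro x hx y hy hxy
  have hslope : 0 < (b ^ x - 1) / x :=
    div_pos (sub_pos.2 (Real.one_lt_rpow hb hx)) hx
  have h := one_div_le_one_div_of_le hslope (Real.monotoneOn_rpow_sub_one_div
    (zero_lt_one.trans hb) hx hy hxy)
  simpa only [one_div_div] using h

theorem gamma_eq_mul_div_inv_rpow_sub_one {u α : ℝ} (hu : 0 < u) (hne : u ^ α ≠ 1) :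
    α * (1 - u) * u ^ (α - 1) / (1 - u ^ α) = (1 - u) / u * (α / (u⁻¹ ^ α - 1)) := by
  have : 1 - u ^ α ≠ 0 := sub_ne_zero.2 hne.symm
  rw [Real.rpow_sub_one hu.ne', Real.inv_rpow hu.le]
  field_simp

theorem gamma_decreasing_in_alpha (u : ℝ) (hu0 : 0 < u) (hu1 : u < 1) :
    AntitoneOn (fun α : ℝ => α * (1 - u) * u ^ (α - 1) / (1 - u ^ α)) (Set.Ioi (0 : ℝ)) := by
  intro a ha b hb hab
  have hu_rpow_ne_one {α : ℝ} (hα : 0 < α) : u ^ α ≠ 1 := (Real.rpow_lt_one hu0.le hu1 hα).ne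
  simp only [gamma_eq_mul_div_inv_rpow_sub_one hu0 (hu_rpow_ne_one ha),
    gamma_eq_mul_div_inv_rpow_sub_one hu0 (hu_rpow_ne_one hb)]
  have hconst : 0 ≤ (1 - u) / u := div_nonneg (sub_nonneg.2 hu1.le) hu0.le
  exact mul_le_mul_of_nonneg_left
    (Real.antitoneOn_div_rpow_sub_one (one_lt_inv_iff₀.2 ⟨hu0, hu1⟩) ha hb hab) hconst
end

section
/- For each fixed α with 0 < α ≤ 1, the function u ↦ α(1 - u)u^(α-1) / (1 - u^α) is decreasing in u on (0, 1). -/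
/-!
Writing `β = 1 - α`, one has `γ(u) = α / g(u)` with `g(u) = (u ^ β - u) / (1 - u)`, which is
positive on `(0, 1)`. Since `g(u)` is the slope of the secant of the convex function
`u ↦ u - u ^ β` between `u` and `1`, it increases with `u`, so `γ` decreases.
-/

open Set

namespace Real

theorem monotoneOn_rpow_sub_self_div_one_sub {β : ℝ} (hβ0 : 0 ≤ β) (hβ1 : β ≤ 1) :
    MonotoneOn (fun u : ℝ => (u ^ β - u) / (1 - u)) (Ici 0 \ {1}) := by
  have hconv : ConvexOn ℝ (Ici 0) (fun u : ℝ => u - u ^ β) :=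
    (convexOn_id (convex_Ici 0)).sub (concaveOn_rpow hβ0 hβ1)
  intro x hx y hy hxy
  convert hconv.secant_mono (a := 1) (by simp) hx.1 hy.1 hx.2 hy.2 hxy using 1 <;>
    rw [one_rpow, sub_self, sub_zero, ← neg_div_neg_eq, neg_sub, neg_sub]

theorem rpow_sub_self_div_one_sub_pos {β u : ℝ} (hβ : β < 1) (hu : u ∈ Ioo 0 1) :
    0 < (u ^ β - u) / (1 - u) :=
  div_pos (sub_pos.2 (self_lt_rpow_of_lt_one hu.1 hu.2 hβ)) (sub_pos.2 hu.2)

theorem mul_one_sub_div_one_sub_rpow_eq {α u : ℝ} (hu : 0 < u) :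
    α * (1 - u) * u ^ (α - 1) / (1 - u ^ α) = α / ((u ^ (1 - α) - u) / (1 - u)) := by
  have hfactor : (u ^ (1 - α) - u) * u ^ (α - 1) = 1 - u ^ α := by
    rw [sub_mul, ← rpow_add hu, mul_comm u, ← rpow_add_one hu.ne']
    simp
  have hpos : 0 < u ^ (α - 1) := rpow_pos_of_pos hu _
  rw [← hfactor, div_div_eq_mul_div, mul_div_mul_right _ _ hpos.ne']

end Real

theorem gamma_decreasing_in_u (α : ℝ) (hα0 : 0 < α) (hα1 : α ≤ 1) :
    AntitoneOn (fun u : ℝ => α * (1 - u) * u ^ (α - 1) / (1 - u ^ α)) (Set.Ioo (0 : ℝ) 1) := by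
  have hmono : MonotoneOn (fun u : ℝ => (u ^ (1 - α) - u) / (1 - u)) (Ioo 0 1) :=
    (Real.monotoneOn_rpow_sub_self_div_one_sub (by linarith) (by linarith)).mono
      fun u hu => ⟨hu.1.le, hu.2.ne⟩
  intro x hx y hy hxy
  simp only [Real.mul_one_sub_div_one_sub_rpow_eq hx.1, Real.mul_one_sub_div_one_sub_rpow_eq hy.1]
  exact div_le_div_of_nonneg_left hα0.le
    (Real.rpow_sub_self_div_one_sub_pos (by linarith) hx) (hmono hx hy hxy)
end

section
/- For each fixed α ≥ 1, the function u ↦ α(1 - u)u^(α-1) / (1 - u^α) is increasing in u on (0, 1). -/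
/-!
By the quotient rule the derivative of `α (1 - u) u ^ (α - 1) / (1 - u ^ α)` is
`α u ^ (α - 2) (u ^ α - α u + α - 1) / (1 - u ^ α) ^ 2`, and the middle factor is nonnegative
by Bernoulli's inequality `u ^ α ≥ 1 + α (u - 1)` for `α ≥ 1`.
-/

open Set

lemma one_add_mul_sub_one_le_rpow {u α : ℝ} (hu : 0 ≤ u) (hα : 1 ≤ α) :
    1 + α * (u - 1) ≤ u ^ α := by
  simpa using one_add_mul_self_le_rpow_one_add (s := u - 1) (by linarith) hα

lemma hasDerivAt_mul_one_sub_mul_rpow_div_one_sub_rpow {α u : ℝ} (hu : 0 < u)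
    (hne : u ^ α ≠ 1) :
    HasDerivAt (fun u : ℝ => α * (1 - u) * u ^ (α - 1) / (1 - u ^ α))
      (α * u ^ (α - 2) * (u ^ α - α * u + α - 1) / (1 - u ^ α) ^ 2) u := by
  have hnum : HasDerivAt (fun u : ℝ => α * (1 - u) * u ^ (α - 1))
      (α * (-1) * u ^ (α - 1) + α * (1 - u) * ((α - 1) * u ^ (α - 1 - 1))) u :=
    (((hasDerivAt_id u).const_sub 1).const_mul α).mul (Real.hasDerivAt_rpow_const (.inl hu.ne'))
  have hden : HasDerivAt (fun u : ℝ => 1 - u ^ α) (-(α * u ^ (α - 1))) u :=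
    (Real.hasDerivAt_rpow_const (.inl hu.ne')).const_sub 1
  refine (hnum.div hden (sub_ne_zero.2 hne.symm)).congr_deriv ?_
  have hpow₁ : u ^ (α - 1) = u ^ (α - 2) * u := by
    rw [← Real.rpow_add_one hu.ne']; ring_nf
  have hpow₂ : u ^ α = u ^ (α - 2) * u * u := by
    rw [← Real.rpow_add_one hu.ne', ← Real.rpow_add_one hu.ne']; ring_nf
  rw [show α - 1 - 1 = α - 2 by ring, hpow₁, hpow₂]
  ring

theorem gamma_increasing_in_u (α : ℝ) (hα : 1 ≤ α) :
    MonotoneOn (fun u : ℝ => α * (1 - u) * u ^ (α - 1) / (1 - u ^ α)) (Set.Ioo (0 : ℝ) 1) := by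
  have hderiv := fun u (hu : u ∈ Ioo (0 : ℝ) 1) =>
    hasDerivAt_mul_one_sub_mul_rpow_div_one_sub_rpow hu.1
      (Real.rpow_lt_one hu.1.le hu.2 (by linarith)).ne
  refine monotoneOn_of_hasDerivWithinAt_nonneg (convex_Ioo 0 1)
    (fun u hu => (hderiv u hu).continuousAt.continuousWithinAt)
    (fun u hu => (hderiv u (interior_subset hu)).hasDerivWithinAt) fun u hu => ?_
  rw [interior_Ioo] at hu
  have hbernoulli := one_add_mul_sub_one_le_rpow hu.1.le hα
  have hC : 0 ≤ α * u ^ (α - 2) := mul_nonneg (by linarith) (Real.rpow_nonneg hu.1.le _)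
  exact div_nonneg (mul_nonneg hC (by linarith)) (sq_nonneg _)
end

section
/- For each fixed u with 0 < u < 1, the function φ(α) = α·u^(α-1) / (1 - u^α) is convex in α on (0, ∞). -/
/-!
Writing `u = exp (-t)` with `t > 0`, one has `φ α = (u t)⁻¹ g (t α)` for `g x = x / (exp x - 1)`,
so it suffices that `g` is convex on `(0, ∞)`. Its second derivative is
`exp x * ((x - 2) * exp x + x + 2) / (exp x - 1) ^ 3`, and the bracket vanishes at `0` and is
increasing, because its derivative `(x - 1) * exp x + 1` is nonnegative by `exp (-x) ≥ 1 - x`.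
-/

open Real Set

lemma sub_one_mul_exp_add_one_nonneg (x : ℝ) : 0 ≤ (x - 1) * exp x + 1 := by
  have h := mul_le_mul_of_nonneg_right (add_one_le_exp (-x)) (exp_pos x).le
  rw [← exp_add, neg_add_cancel, exp_zero] at h
  linarith

lemma hasDerivAt_sub_two_mul_exp_add (x : ℝ) :
    HasDerivAt (fun x => (x - 2) * exp x + x + 2) ((x - 1) * exp x + 1) x :=
  (((((hasDerivAt_id' x).sub_const 2).mul (hasDerivAt_exp x)).add (hasDerivAt_id' x)).add_const
    2).congr_deriv (by ring)

lemma sub_two_mul_exp_add_nonneg {x : ℝ} (hx : 0 ≤ x) : 0 ≤ (x - 2) * exp x + x + 2 := by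
  have hmono : Monotone fun x => (x - 2) * exp x + x + 2 :=
    monotone_of_hasDerivAt_nonneg hasDerivAt_sub_two_mul_exp_add sub_one_mul_exp_add_one_nonneg
  simpa using hmono hx

lemma exp_sub_one_ne_zero {x : ℝ} (hx : x ≠ 0) : exp x - 1 ≠ 0 :=
  sub_ne_zero.2 (mt (exp_eq_one_iff x).1 hx)

lemma hasDerivAt_div_exp_sub_one {x : ℝ} (hx : x ≠ 0) :
    HasDerivAt (fun x => x / (exp x - 1)) ((exp x - 1 - x * exp x) / (exp x - 1) ^ 2) x :=
  ((hasDerivAt_id' x).div ((hasDerivAt_exp x).sub_const 1) (exp_sub_one_ne_zero hx)).congr_deriv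
    (by ring)

lemma hasDerivAt_deriv_div_exp_sub_one {x : ℝ} (hx : x ≠ 0) :
    HasDerivAt (fun x => (exp x - 1 - x * exp x) / (exp x - 1) ^ 2)
      (exp x * ((x - 2) * exp x + x + 2) / (exp x - 1) ^ 3) x := by
  have hE := exp_sub_one_ne_zero hx
  have hnum : HasDerivAt (fun x => exp x - 1 - x * exp x) (-(x * exp x)) x :=
    (((hasDerivAt_exp x).sub_const 1).sub ((hasDerivAt_id' x).mul (hasDerivAt_exp x))).congr_deriv
      (by ring)
  refine (hnum.div (((hasDerivAt_exp x).sub_const 1).fun_pow 2) (pow_ne_zero 2 hE)).congr_deriv ?_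
  field_simp
  ring

lemma convexOn_div_exp_sub_one : ConvexOn ℝ (Ioi 0) fun x => x / (exp x - 1) := by
  refine convexOn_of_hasDerivWithinAt2_nonneg (convex_Ioi 0)
    (f' := fun x => (exp x - 1 - x * exp x) / (exp x - 1) ^ 2)
    (f'' := fun x => exp x * ((x - 2) * exp x + x + 2) / (exp x - 1) ^ 3)
    (fun x hx => (hasDerivAt_div_exp_sub_one (ne_of_gt hx)).continuousAt.continuousWithinAt)
    (fun x hx => ?_) (fun x hx => ?_) (fun x hx => ?_) <;> rw [interior_Ioi] at hx
  · exact (hasDerivAt_div_exp_sub_one hx.ne').hasDerivWithinAt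
  · exact (hasDerivAt_deriv_div_exp_sub_one hx.ne').hasDerivWithinAt
  · have hE : 0 < exp x - 1 := sub_pos.2 (one_lt_exp_iff.2 hx)
    have := sub_two_mul_exp_add_nonneg hx.le
    positivity

lemma ConvexOn.const_mul_comp_mul_Ioi {f : ℝ → ℝ} (hf : ConvexOn ℝ (Ioi 0) f) {c t : ℝ}
    (hc : 0 ≤ c) (ht : 0 < t) : ConvexOn ℝ (Ioi 0) fun x => c * f (t * x) := by
  have := (hf.comp_linearMap (LinearMap.mulLeft ℝ t)).smul hc
  rwa [show ⇑(LinearMap.mulLeft ℝ t) = (t * ·) from rfl, preimage_const_mul_Ioi₀ _ ht,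
    zero_div] at this

lemma rpow_mul_div_one_sub_rpow_eq {u : ℝ} (hu0 : 0 < u) (hu1 : u ≠ 1) (α : ℝ) :
    α * u ^ (α - 1) / (1 - u ^ α) =
      (u * -log u)⁻¹ * (-log u * α / (exp (-log u * α) - 1)) := by
  have hlog : log u ≠ 0 := log_ne_zero_of_pos_of_ne_one hu0 hu1
  rw [rpow_sub hu0, rpow_one, rpow_def_of_pos hu0, neg_mul, exp_neg]
  rcases eq_or_ne α 0 with rfl | hα
  · simp
  have hE : exp (log u * α) ≠ 1 := mt (exp_eq_one_iff _).1 (mul_ne_zero hlog hα)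
  field_simp

theorem varphi_convex_in_alpha (u : ℝ) (hu0 : 0 < u) (hu1 : u < 1) :
    ConvexOn ℝ (Set.Ioi (0 : ℝ)) (fun α : ℝ => α * u ^ (α - 1) / (1 - u ^ α)) := by
  have ht : 0 < -log u := neg_pos.2 (log_neg hu0 hu1)
  have h := convexOn_div_exp_sub_one.const_mul_comp_mul_Ioi (inv_nonneg.2 (mul_pos hu0 ht).le) ht
  simpa only [rpow_mul_div_one_sub_rpow_eq hu0 hu1.ne] using h
end

section
/- Let F̄(θ₁, θ₂, α₁, α₂)(x) = (1 - e^(-θ₁x^(-φ)))^(α₁) · (1 - e^(-θ₂x^(-φ)))^(α₂) be the reliability function of the minimum of two independent EG₂(θᵢ, φ, αᵢ) random variables, for a fixed x > 0 and φ > 0. If (α₁ - α₂)(θ₁ - θ₂) ≤ 0, then (α₁ - α₂)(∂F̄/∂α₁ - ∂F̄/∂α₂) + (θ₁ - θ₂)(∂F̄/∂θ₁ - ∂F̄/∂θ₂) ≤ 0. -/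
/-! With `c = x ^ (-φ)` and `L t = log (1 - exp (-t * c))` the reliability is
`F̄ = exp (α₁ L θ₁ + α₂ L θ₂)`, so `∂F̄/∂αᵢ = F̄ L θᵢ` and `∂F̄/∂θᵢ = F̄ αᵢ L' θᵢ` with
`L' t = c / (exp (t * c) - 1)`. The Schur sum is therefore `F̄` times
`(α₁ - α₂) (L θ₁ - L θ₂) + (θ₁ - θ₂) (α₁ L' θ₁ - α₂ L' θ₂)`, and both terms are nonpositive
under the condition because `L` is increasing and concave on `(0, ∞)`. -/

open Real Set

theorem schur_sum_nonpos {s : Set ℝ} {L L' : ℝ → ℝ} (hL : MonotoneOn L s)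
    (hL' : AntitoneOn L' s) (hL'_nonneg : ∀ t ∈ s, 0 ≤ L' t) {α₁ α₂ θ₁ θ₂ : ℝ}
    (hα₁ : 0 ≤ α₁) (hα₂ : 0 ≤ α₂) (hθ₁ : θ₁ ∈ s) (hθ₂ : θ₂ ∈ s)
    (hS : (α₁ - α₂) * (θ₁ - θ₂) ≤ 0) :
    (α₁ - α₂) * (L θ₁ - L θ₂) + (θ₁ - θ₂) * (α₁ * L' θ₁ - α₂ * L' θ₂) ≤ 0 := by
  wlog hθ : θ₁ ≤ θ₂ generalizing α₁ α₂ θ₁ θ₂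
  · have := this hα₂ hα₁ hθ₂ hθ₁ (by linarith) (le_of_not_ge hθ)
    linarith
  rcases hθ.eq_or_lt with rfl | hlt
  · simp
  have hα : 0 ≤ α₁ - α₂ := nonneg_of_mul_nonpos_left hS (sub_neg.2 hlt)
  have hLθ : L θ₁ ≤ L θ₂ := hL hθ₁ hθ₂ hθ
  have hL'θ : α₂ * L' θ₂ ≤ α₁ * L' θ₁ :=
    mul_le_mul (sub_nonneg.1 hα) (hL' hθ₁ hθ₂ hθ) (hL'_nonneg θ₂ hθ₂) hα₁
  have hα_term := mul_nonpos_of_nonneg_of_nonpos hα (sub_nonpos.2 hLθ)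
  have hθ_term := mul_nonpos_of_nonpos_of_nonneg (sub_nonpos.2 hθ) (sub_nonneg.2 hL'θ)
  linarith

theorem one_sub_exp_neg_mul_pos {c t : ℝ} (hc : 0 < c) (ht : 0 < t) : 0 < 1 - exp (-t * c) := by
  have : exp (-t * c) < 1 := exp_lt_one_iff.mpr (by nlinarith)
  linarith

theorem monotoneOn_log_one_sub_exp_neg_mul {c : ℝ} (hc : 0 < c) :
    MonotoneOn (fun t => log (1 - exp (-t * c))) (Ioi 0) := by
  intro s hs t _ hst
  apply log_le_log (one_sub_exp_neg_mul_pos hc hs)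
  gcongr

theorem antitoneOn_div_exp_mul_sub_one {c : ℝ} (hc : 0 < c) :
    AntitoneOn (fun t => c / (exp (t * c) - 1)) (Ioi 0) := by
  intro s hs t _ hst
  have : 1 < exp (s * c) := one_lt_exp_iff.mpr (mul_pos hs hc)
  apply div_le_div_of_nonneg_left hc.le (by linarith)
  gcongr

theorem div_exp_mul_sub_one_nonneg {c t : ℝ} (hc : 0 < c) (ht : 0 < t) :
    0 ≤ c / (exp (t * c) - 1) := by
  have : 1 < exp (t * c) := one_lt_exp_iff.mpr (mul_pos ht hc)
  exact div_nonneg hc.le (by linarith)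

theorem hasDerivAt_one_sub_exp_neg_mul_rpow {c : ℝ} (hc : 0 < c) (a : ℝ) {t : ℝ} (ht : 0 < t) :
    HasDerivAt (fun t => (1 - exp (-t * c)) ^ a)
      ((1 - exp (-t * c)) ^ a * (a * (c / (exp (t * c) - 1)))) t := by
  have hu := one_sub_exp_neg_mul_pos hc ht
  have hinner : HasDerivAt (fun t => 1 - exp (-t * c)) (exp (-t * c) * c) t := by
    simpa using (((hasDerivAt_id t).neg.mul_const c).exp.const_sub 1)
  refine ((hasDerivAt_rpow_const (p := a) (Or.inl hu.ne')).comp t hinner).congr_deriv ?_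
  have : 1 < exp (t * c) := one_lt_exp_iff.mpr (mul_pos ht hc)
  rw [rpow_sub_one hu.ne', neg_mul, exp_neg]
  field_simp

theorem schur_condition_min_general (x φ θ₁ θ₂ α₁ α₂ : ℝ) (hx : 0 < x)
    (hθ₁ : 0 < θ₁) (hθ₂ : 0 < θ₂) (hα₁ : 0 < α₁) (hα₂ : 0 < α₂)
    (hS : (α₁ - α₂) * (θ₁ - θ₂) ≤ 0) :
    let Fb : ℝ → ℝ → ℝ → ℝ → ℝ := fun a₁ a₂ t₁ t₂ =>
      (1 - Real.exp (-t₁ * x ^ (-φ))) ^ a₁ * (1 - Real.exp (-t₂ * x ^ (-φ))) ^ a₂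
    (α₁ - α₂) * (deriv (fun a => Fb a α₂ θ₁ θ₂) α₁ - deriv (fun a => Fb α₁ a θ₁ θ₂) α₂) +
      (θ₁ - θ₂) * (deriv (fun t => Fb α₁ α₂ t θ₂) θ₁ - deriv (fun t => Fb α₁ α₂ θ₁ t) θ₂) ≤ 0 := by
  intro Fb
  have hc : 0 < x ^ (-φ) := rpow_pos_of_pos hx _
  set c := x ^ (-φ)
  set u : ℝ → ℝ := fun t => 1 - exp (-t * c)
  have hu₁ := one_sub_exp_neg_mul_pos hc hθ₁
  have hu₂ := one_sub_exp_neg_mul_pos hc hθ₂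
  have dα₁ := ((hasStrictDerivAt_const_rpow hu₁ α₁).hasDerivAt.mul_const (u θ₂ ^ α₂)).deriv
  have dα₂ := ((hasStrictDerivAt_const_rpow hu₂ α₂).hasDerivAt.const_mul (u θ₁ ^ α₁)).deriv
  have dθ₁ := ((hasDerivAt_one_sub_exp_neg_mul_rpow hc α₁ hθ₁).mul_const (u θ₂ ^ α₂)).deriv
  have dθ₂ := ((hasDerivAt_one_sub_exp_neg_mul_rpow hc α₂ hθ₂).const_mul (u θ₁ ^ α₁)).deriv
  simp only [Fb]
  rw [dα₁, dα₂, dθ₁, dθ₂]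
  have hsum := schur_sum_nonpos (monotoneOn_log_one_sub_exp_neg_mul hc)
    (antitoneOn_div_exp_mul_sub_one hc) (fun _ ht => div_exp_mul_sub_one_nonneg hc ht)
    hα₁.le hα₂.le hθ₁ hθ₂ hS
  have hF : 0 < u θ₁ ^ α₁ * u θ₂ ^ α₂ := by positivity
  linear_combination mul_nonpos_of_nonneg_of_nonpos hF.le hsum

theorem schur_condition_min (x φ θ₁ θ₂ α₁ α₂ : ℝ) (hx : 0 < x) (hφ : 0 < φ)
    (hθ₁ : 0 < θ₁) (hθ₂ : 0 < θ₂) (hα₁ : 0 < α₁) (hα₂ : 0 < α₂)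
    (hS : (α₁ - α₂) * (θ₁ - θ₂) ≤ 0) :
    let Fb : ℝ → ℝ → ℝ → ℝ → ℝ := fun a₁ a₂ t₁ t₂ =>
      (1 - Real.exp (-t₁ * x ^ (-φ))) ^ a₁ * (1 - Real.exp (-t₂ * x ^ (-φ))) ^ a₂
    (α₁ - α₂) * (deriv (fun a => Fb a α₂ θ₁ θ₂) α₁ - deriv (fun a => Fb α₁ a θ₁ θ₂) α₂) +
      (θ₁ - θ₂) * (deriv (fun t => Fb α₁ α₂ t θ₂) θ₁ - deriv (fun t => Fb α₁ α₂ θ₁ t) θ₂) ≤ 0 :=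
  schur_condition_min_general x φ θ₁ θ₂ α₁ α₂ hx hθ₁ hθ₂ hα₁ hα₂ hS
end

section
/- Let X₁, X₂ be independent with Xᵢ ~ EG₂(θᵢ, φ, αᵢ) and X₁*, X₂* be independent with Xᵢ* ~ EG₂(θᵢ*, φ, αᵢ*). Suppose (α₁-α₂)(θ₁-θ₂) ≤ 0 (the parameter matrix is in S₂) and the matrix [[α₁*, α₂*], [θ₁*, θ₂*]] equals [[α₁, α₂], [θ₁, θ₂]] multiplied on the right by a T-transform matrix T_w = wI + (1-w)Π for some w ∈ [0,1], where Π is the 2×2 permutation matrix swapping coordinates. Then min(X₁, X₂) ≤_st min(X₁*, X₂*), i.e., for all x > 0, (1-e^(-θ₁x^(-φ)))^(α₁)(1-e^(-θ₂x^(-φ)))^(α₂) ≤ (1-e^(-θ₁*x^(-φ)))^(α₁*)(1-e^(-θ₂*x^(-φ)))^(α₂*). -/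
/-!
Put `t = x ^ (-φ)` and `f u = log (1 - exp (-u))`. Both sides are exponentials of
`α₁ f (θ₁ t) + α₂ f (θ₂ t)` and of the same sum with the transformed parameters. Since `f` is
concave, the transformed sum is at least `α₁ f (θ₁ t) + α₂ f (θ₂ t) + 2w(1-w)(α₂-α₁)(f(θ₁ t) - f(θ₂ t))`,
and the correction term is nonnegative because `f` is increasing and `(α₁ - α₂)(θ₁ - θ₂) ≤ 0`.
-/

open Real Set

theorem ConcaveOn.mul_add_mul_le_of_tTransform {s : Set ℝ} {f : ℝ → ℝ} (hf : ConcaveOn ℝ s f)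
    (hmono : MonotoneOn f s) {u₁ u₂ α₁ α₂ w : ℝ} (hu₁ : u₁ ∈ s) (hu₂ : u₂ ∈ s)
    (hα₁ : 0 ≤ α₁) (hα₂ : 0 ≤ α₂) (hS : (α₁ - α₂) * (u₁ - u₂) ≤ 0) (hw : w ∈ Icc (0 : ℝ) 1) :
    α₁ * f u₁ + α₂ * f u₂ ≤
      (w * α₁ + (1 - w) * α₂) * f (w * u₁ + (1 - w) * u₂) +
        (w * α₂ + (1 - w) * α₁) * f (w * u₂ + (1 - w) * u₁) := by
  obtain ⟨hw₀, hw₁⟩ := hw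
  have hw₁' : 0 ≤ 1 - w := sub_nonneg.2 hw₁
  have h₁ : w * f u₁ + (1 - w) * f u₂ ≤ f (w * u₁ + (1 - w) * u₂) :=
    hf.2 hu₁ hu₂ hw₀ hw₁' (by ring)
  have h₂ : w * f u₂ + (1 - w) * f u₁ ≤ f (w * u₂ + (1 - w) * u₁) :=
    hf.2 hu₂ hu₁ hw₀ hw₁' (by ring)
  have hmix : 0 ≤ (α₂ - α₁) * (f u₁ - f u₂) := by
    rcases lt_trichotomy u₁ u₂ with h | rfl | h
    · have hα : α₂ - α₁ ≤ 0 := by nlinarith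
      exact mul_nonneg_of_nonpos_of_nonpos hα (sub_nonpos.2 (hmono hu₁ hu₂ h.le))
    · simp
    · have hα : 0 ≤ α₂ - α₁ := by nlinarith
      exact mul_nonneg hα (sub_nonneg.2 (hmono hu₂ hu₁ h.le))
  have hα₁' : 0 ≤ w * α₁ + (1 - w) * α₂ := by positivity
  have hα₂' : 0 ≤ w * α₂ + (1 - w) * α₁ := by positivity
  linarith [mul_le_mul_of_nonneg_left h₁ hα₁', mul_le_mul_of_nonneg_left h₂ hα₂',
    mul_nonneg (mul_nonneg hw₀ hw₁') hmix]

noncomputable def logOneSubExpNeg (u : ℝ) : ℝ := log (1 - exp (-u))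

theorem one_sub_exp_neg_pos {u : ℝ} (hu : 0 < u) : 0 < 1 - exp (-u) := by
  have : exp (-u) < 1 := exp_lt_one_iff.2 (neg_neg_of_pos hu)
  linarith

theorem one_sub_exp_neg_rpow {u : ℝ} (hu : 0 < u) (α : ℝ) :
    (1 - exp (-u)) ^ α = exp (α * logOneSubExpNeg u) := by
  rw [rpow_def_of_pos (one_sub_exp_neg_pos hu), logOneSubExpNeg, mul_comm]

theorem monotoneOn_logOneSubExpNeg : MonotoneOn logOneSubExpNeg (Ioi 0) := by
  intro u hu v _ huv
  refine log_le_log (one_sub_exp_neg_pos hu) ?_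
  have : exp (-v) ≤ exp (-u) := exp_le_exp.2 (neg_le_neg huv)
  linarith

theorem concaveOn_logOneSubExpNeg : ConcaveOn ℝ (Ioi 0) logOneSubExpNeg := by
  refine ⟨convex_Ioi 0, fun u hu v hv a b ha hb hab => ?_⟩
  have hexp := convexOn_exp.2 (mem_univ (-u)) (mem_univ (-v)) ha hb hab
  simp only [smul_eq_mul, mul_neg, ← neg_add] at hexp
  calc a • logOneSubExpNeg u + b • logOneSubExpNeg v
      ≤ log (a • (1 - exp (-u)) + b • (1 - exp (-v))) :=
        strictConcaveOn_log_Ioi.concaveOn.2 (one_sub_exp_neg_pos hu) (one_sub_exp_neg_pos hv)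
          ha hb hab
    _ ≤ logOneSubExpNeg (a • u + b • v) := by
        refine log_le_log
          (convex_Ioi (0 : ℝ) (one_sub_exp_neg_pos hu) (one_sub_exp_neg_pos hv) ha hb hab) ?_
        simp only [smul_eq_mul]
        linarith

theorem min_st_order_chain_majorization_general (φ θ₁ θ₂ α₁ α₂ θ₁' θ₂' α₁' α₂' w : ℝ)
    (hθ₁ : 0 < θ₁) (hθ₂ : 0 < θ₂) (hα₁ : 0 < α₁) (hα₂ : 0 < α₂)
    (hS : (α₁ - α₂) * (θ₁ - θ₂) ≤ 0)
    (hw : w ∈ Set.Icc (0 : ℝ) 1)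
    (hα₁' : α₁' = w * α₁ + (1 - w) * α₂) (hα₂' : α₂' = w * α₂ + (1 - w) * α₁)
    (hθ₁' : θ₁' = w * θ₁ + (1 - w) * θ₂) (hθ₂' : θ₂' = w * θ₂ + (1 - w) * θ₁) :
    ∀ x : ℝ, 0 < x →
      (1 - Real.exp (-θ₁ * x ^ (-φ))) ^ α₁ * (1 - Real.exp (-θ₂ * x ^ (-φ))) ^ α₂ ≤
        (1 - Real.exp (-θ₁' * x ^ (-φ))) ^ α₁' * (1 - Real.exp (-θ₂' * x ^ (-φ))) ^ α₂' := by
  intro x hx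
  set t := x ^ (-φ)
  have ht : 0 < t := rpow_pos_of_pos hx _
  have hθ₁'t : 0 < θ₁' * t := by
    rw [hθ₁']; exact mul_pos (convex_Ioi (0 : ℝ) hθ₁ hθ₂ hw.1 (sub_nonneg.2 hw.2) (by ring)) ht
  have hθ₂'t : 0 < θ₂' * t := by
    rw [hθ₂']; exact mul_pos (convex_Ioi (0 : ℝ) hθ₂ hθ₁ hw.1 (sub_nonneg.2 hw.2) (by ring)) ht
  have key := concaveOn_logOneSubExpNeg.mul_add_mul_le_of_tTransform monotoneOn_logOneSubExpNeg
    (mul_pos hθ₁ ht) (mul_pos hθ₂ ht) hα₁.le hα₂.le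
    (by rw [← sub_mul, ← mul_assoc]; exact mul_nonpos_of_nonpos_of_nonneg hS ht.le) hw
  simp only [neg_mul, one_sub_exp_neg_rpow (mul_pos hθ₁ ht), one_sub_exp_neg_rpow (mul_pos hθ₂ ht),
    one_sub_exp_neg_rpow hθ₁'t, one_sub_exp_neg_rpow hθ₂'t, ← exp_add, exp_le_exp]
  convert key using 4 <;> subst_vars <;> ring

theorem min_st_order_chain_majorization (φ θ₁ θ₂ α₁ α₂ θ₁' θ₂' α₁' α₂' w : ℝ)
    (hφ : 0 < φ) (hθ₁ : 0 < θ₁) (hθ₂ : 0 < θ₂) (hα₁ : 0 < α₁) (hα₂ : 0 < α₂)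
    (hS : (α₁ - α₂) * (θ₁ - θ₂) ≤ 0)
    (hw : w ∈ Set.Icc (0 : ℝ) 1)
    (hα₁' : α₁' = w * α₁ + (1 - w) * α₂) (hα₂' : α₂' = w * α₂ + (1 - w) * α₁)
    (hθ₁' : θ₁' = w * θ₁ + (1 - w) * θ₂) (hθ₂' : θ₂' = w * θ₂ + (1 - w) * θ₁) :
    ∀ x : ℝ, 0 < x →
      (1 - Real.exp (-θ₁ * x ^ (-φ))) ^ α₁ * (1 - Real.exp (-θ₂ * x ^ (-φ))) ^ α₂ ≤
        (1 - Real.exp (-θ₁' * x ^ (-φ))) ^ α₁' * (1 - Real.exp (-θ₂' * x ^ (-φ))) ^ α₂' :=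
  min_st_order_chain_majorization_general φ θ₁ θ₂ α₁ α₂ θ₁' θ₂' α₁' α₂' w hθ₁ hθ₂ hα₁ hα₂ hS hw hα₁'
    hα₂' hθ₁' hθ₂'
end

section
/- Let X₁, X₂ be independent with Xᵢ ~ EG₂(θᵢ, φ, αᵢ) and X₁*, X₂* be independent with Xᵢ* ~ EG₂(θᵢ*, φ, αᵢ*). Suppose α₁, α₂ ≥ 1, (α₁-α₂)(θ₁-θ₂) ≤ 0 (the parameter matrix is in T₂) and [[α₁*, α₂*], [θ₁*, θ₂*]] = [[α₁, α₂], [θ₁, θ₂]]·T_w for some T-transform matrix T_w, w ∈ [0,1]. Then max(X₁*, X₂*) ≤_st max(X₁, X₂), i.e., for all x > 0, (1-(1-e^(-θ₁x^(-φ)))^(α₁))·(1-(1-e^(-θ₂x^(-φ)))^(α₂)) ≤ (1-(1-e^(-θ₁*x^(-φ)))^(α₁*))·(1-(1-e^(-θ₂*x^(-φ)))^(α₂*)). -/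
/-!
With `t = x ^ (-φ)` and `sᵢ = θᵢ t`, both sides are products of values of
`survivalGE α s = 1 - (1 - e^{-s}) ^ α`. By symmetry we may take `θ₁ ≤ θ₂`, `α₂ ≤ α₁`
and `w ≥ 1/2`; then `T_w` moves the same amount of exponent from `α₁` to `α₂` and the same
amount of scale from `s₂` to `s₁`. Each transfer compares increments of a logarithm over two
intervals of equal length, so it suffices that the derivatives are ordered:
`∂ₘ log (1 - X ^ m) = -log X / (X ^ (-m) - 1)` decreases in `m` and increases in `X`, and
`∂ₛ log (survivalGE α s) = -α (u - 1) / (u ^ α - 1)`, `u = (1 - e^{-s})⁻¹`, increases in `α`,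
and in `s` once `α ≥ 1`. Both facts are monotonicity of secant slopes of the convex functions
`t ↦ b ^ t` and `x ↦ x ^ α`.
-/

open Real Set

/-- The CDF of `EG₂(θ, φ, α)` at `x` is `survivalGE α (θ * x ^ (-φ))`. -/
noncomputable def survivalGE (α s : ℝ) : ℝ := 1 - (1 - exp (-s)) ^ α

lemma add_le_add_of_hasDerivAt_le {f g f' g' : ℝ → ℝ} {x y δ : ℝ} (hδ : 0 ≤ δ)
    (hf : ∀ τ ∈ Icc 0 δ, HasDerivAt f (f' τ) (x + τ))
    (hg : ∀ τ ∈ Icc 0 δ, HasDerivAt g (g' τ) (y + τ))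
    (hfg : ∀ τ ∈ Ioo 0 δ, f' τ ≤ g' τ) :
    f (x + δ) + g y ≤ f x + g (y + δ) := by
  have hd : ∀ τ ∈ Icc 0 δ, HasDerivAt (fun τ ↦ g (y + τ) - f (x + τ)) (g' τ - f' τ) τ :=
    fun τ hτ ↦ ((hg τ hτ).comp_const_add y τ).sub ((hf τ hτ).comp_const_add x τ)
  have hmono : MonotoneOn (fun τ ↦ g (y + τ) - f (x + τ)) (Icc 0 δ) := by
    refine monotoneOn_of_deriv_nonneg (convex_Icc 0 δ)
      (fun τ hτ ↦ (hd τ hτ).continuousAt.continuousWithinAt) ?_ ?_ <;> rw [interior_Icc]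
    · exact fun τ hτ ↦ (hd τ (Ioo_subset_Icc_self hτ)).differentiableAt.differentiableWithinAt
    · intro τ hτ
      rw [(hd τ (Ioo_subset_Icc_self hτ)).deriv]
      exact sub_nonneg.2 (hfg τ hτ)
  have := hmono (left_mem_Icc.2 hδ) (right_mem_Icc.2 hδ) hδ
  simp only [add_zero] at this
  linarith

lemma mul_le_mul_of_log_add_log_le {p q r t : ℝ} (hp : 0 < p) (hq : 0 < q) (hr : 0 < r)
    (ht : 0 < t) (h : log p + log q ≤ log r + log t) : p * q ≤ r * t := by
  rwa [← log_le_log_iff (mul_pos hp hq) (mul_pos hr ht), log_mul hp.ne' hq.ne',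
    log_mul hr.ne' ht.ne']

lemma rpow_sub_one_div_le_rpow_sub_one_div {b s t : ℝ} (hb : 0 < b) (hs : s ≠ 0) (ht : t ≠ 0)
    (hst : s ≤ t) : (b ^ s - 1) / s ≤ (b ^ t - 1) / t := by
  simpa using (convexOn_rpow_left hb).secant_mono (a := 0) trivial trivial trivial hs ht hst

lemma rpow_sub_one_div_sub_one_le {p x y : ℝ} (hp : 1 ≤ p) (hx : 0 ≤ x) (hx1 : x ≠ 1)
    (hy1 : y ≠ 1) (hxy : x ≤ y) : (x ^ p - 1) / (x - 1) ≤ (y ^ p - 1) / (y - 1) := by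
  simpa using (convexOn_rpow hp).secant_mono (a := 1) (mem_Ici.2 zero_le_one) (mem_Ici.2 hx)
    (mem_Ici.2 (hx.trans hxy)) hx1 hy1 hxy

lemma hasDerivAt_log_one_sub_const_rpow {X m : ℝ} (hX : 0 < X) (hX1 : X < 1) (hm : 0 < m) :
    HasDerivAt (fun m ↦ log (1 - X ^ m)) (-log X / (X ^ (-m) - 1)) m := by
  have hXm : X ^ m < 1 := rpow_lt_one hX.le hX1 hm
  convert ((hasStrictDerivAt_const_rpow hX m).hasDerivAt.const_sub 1).log (sub_pos.2 hXm).ne'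
    using 1
  rw [rpow_neg hX.le]
  field_simp

lemma neg_log_div_rpow_neg_sub_one_le {X Y m m' : ℝ} (hX : 0 < X) (hXY : X ≤ Y) (hY : Y < 1)
    (hm : 0 < m) (hmm' : m ≤ m') : -log X / (X ^ (-m') - 1) ≤ -log Y / (Y ^ (-m) - 1) := by
  have hY0 : 0 < Y := hX.trans_le hXY
  have hLY : 0 < -log Y := neg_pos.2 (log_neg hY0 hY)
  have hLYX : -log Y ≤ -log X := neg_le_neg (log_le_log hX hXY)
  have hLX : 0 < -log X := hLY.trans_le hLYX
  have hpow : ∀ Z, 0 < Z → Z ^ (-m) = exp m ^ (-log Z) := fun Z hZ ↦ by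
    rw [← exp_mul, rpow_def_of_pos hZ]; ring_nf
  have hXm : 1 < X ^ (-m) := by
    rw [hpow X hX]; exact one_lt_rpow (one_lt_exp_iff.2 hm) hLX
  have hYm : 1 < Y ^ (-m) := by
    rw [hpow Y hY0]; exact one_lt_rpow (one_lt_exp_iff.2 hm) hLY
  calc -log X / (X ^ (-m') - 1) ≤ -log X / (X ^ (-m) - 1) := by
        refine div_le_div_of_nonneg_left hLX.le (sub_pos.2 hXm) ?_
        exact sub_le_sub_right
          (rpow_le_rpow_of_exponent_ge hX (hXY.trans hY.le) (neg_le_neg hmm')) 1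
    _ ≤ -log Y / (Y ^ (-m) - 1) := by
        have := rpow_sub_one_div_le_rpow_sub_one_div (exp_pos m) hLY.ne' hLX.ne' hLYX
        rw [← hpow X hX, ← hpow Y hY0] at this
        have := one_div_le_one_div_of_le (div_pos (sub_pos.2 hYm) hLY) this
        rwa [one_div_div, one_div_div] at this

lemma one_sub_rpow_mul_one_sub_rpow_le {X Y b c δ : ℝ} (hX : 0 < X) (hXY : X ≤ Y) (hY : Y < 1)
    (hb : 0 < b) (hbc : b ≤ c) (hδ : 0 ≤ δ) :
    (1 - X ^ (c + δ)) * (1 - Y ^ b) ≤ (1 - X ^ c) * (1 - Y ^ (b + δ)) := by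
  have hY0 : 0 < Y := hX.trans_le hXY
  have hX1 : X < 1 := hXY.trans_lt hY
  have hpos : ∀ Z m : ℝ, 0 < Z → Z < 1 → 0 < m → 0 < 1 - Z ^ m :=
    fun Z m hZ hZ1 hm ↦ sub_pos.2 (rpow_lt_one hZ.le hZ1 hm)
  refine mul_le_mul_of_log_add_log_le (hpos X _ hX hX1 (by linarith)) (hpos Y b hY0 hY hb)
    (hpos X c hX hX1 (by linarith)) (hpos Y _ hY0 hY (by linarith)) ?_
  refine add_le_add_of_hasDerivAt_le hδ
    (fun τ hτ ↦ hasDerivAt_log_one_sub_const_rpow hX hX1 (by linarith [hτ.1]))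
    (fun τ hτ ↦ hasDerivAt_log_one_sub_const_rpow hY0 hY (by linarith [hτ.1])) fun τ hτ ↦ ?_
  exact neg_log_div_rpow_neg_sub_one_le hX hXY hY (by linarith [hτ.1]) (by linarith)

lemma mul_sub_one_div_rpow_sub_one_le {u u' α α' : ℝ} (hu : 1 < u) (huu' : u ≤ u') (hα : 1 ≤ α)
    (hαα' : α ≤ α') : α' * (u' - 1) / (u' ^ α' - 1) ≤ α * (u - 1) / (u ^ α - 1) := by
  have hu' : 1 < u' := hu.trans_le huu'
  have hα0 : 0 < α := zero_lt_one.trans_le hα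
  have hα'0 : 0 < α' := hα0.trans_le hαα'
  have huα : 1 < u ^ α := one_lt_rpow hu hα0
  have hu'α : 1 < u' ^ α := one_lt_rpow hu' hα0
  have hu'α' : 1 < u' ^ α' := one_lt_rpow hu' hα'0
  calc α' * (u' - 1) / (u' ^ α' - 1) = (u' - 1) / ((u' ^ α' - 1) / α') := by field_simp
    _ ≤ (u' - 1) / ((u' ^ α - 1) / α) := by
        refine div_le_div_of_nonneg_left (by linarith) (div_pos (by linarith) hα0) ?_
        exact rpow_sub_one_div_le_rpow_sub_one_div (by linarith) hα0.ne' hα'0.ne' hαα'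
    _ = α / ((u' ^ α - 1) / (u' - 1)) := by field_simp
    _ ≤ α / ((u ^ α - 1) / (u - 1)) := by
        refine div_le_div_of_nonneg_left hα0.le (div_pos (by linarith) (by linarith)) ?_
        exact rpow_sub_one_div_sub_one_le hα (by linarith) hu.ne' hu'.ne' huu'
    _ = α * (u - 1) / (u ^ α - 1) := by field_simp

lemma one_sub_exp_neg_pos_s9 {s : ℝ} (hs : 0 < s) : 0 < 1 - exp (-s) := by
  simpa using exp_lt_one_iff.2 (neg_lt_zero.2 hs)

lemma survivalGE_pos {α s : ℝ} (hα : 0 < α) (hs : 0 ≤ s) : 0 < survivalGE α s :=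
  sub_pos.2 (rpow_lt_one (by simpa using exp_le_one_iff.2 (neg_nonpos.2 hs))
    (sub_lt_self 1 (exp_pos _)) hα)

lemma hasDerivAt_log_survivalGE {α s : ℝ} (hα : 0 < α) (hs : 0 < s) :
    HasDerivAt (fun s ↦ log (survivalGE α s))
      (-(α * ((1 - exp (-s))⁻¹ - 1) / ((1 - exp (-s))⁻¹ ^ α - 1))) s := by
  have hv := one_sub_exp_neg_pos_s9 hs
  have hvα : (1 - exp (-s)) ^ α < 1 := rpow_lt_one hv.le (sub_lt_self 1 (exp_pos _)) hα
  have hder : HasDerivAt (fun s ↦ 1 - exp (-s)) (exp (-s)) s := by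
    simpa using ((hasDerivAt_neg s).exp.const_sub 1)
  unfold survivalGE
  convert ((hder.rpow_const (Or.inl hv.ne')).const_sub 1).log (sub_pos.2 hvα).ne' using 1
  rw [inv_rpow hv.le, rpow_sub_one hv.ne']
  field_simp
  ring

lemma survivalGE_mul_survivalGE_le {c d s t δ : ℝ} (hs : 0 < s) (hst : s ≤ t) (hd : 1 ≤ d)
    (hdc : d ≤ c) (hδ : 0 ≤ δ) :
    survivalGE c s * survivalGE d (t + δ) ≤ survivalGE c (s + δ) * survivalGE d t := by
  have hd0 : 0 < d := zero_lt_one.trans_le hd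
  have hc0 : 0 < c := hd0.trans_le hdc
  have ht : 0 < t := hs.trans_le hst
  refine mul_le_mul_of_log_add_log_le (survivalGE_pos hc0 hs.le)
    (survivalGE_pos hd0 (by linarith)) (survivalGE_pos hc0 (by linarith))
    (survivalGE_pos hd0 ht.le) ?_
  have := add_le_add_of_hasDerivAt_le hδ
    (fun τ hτ ↦ hasDerivAt_log_survivalGE hd0 (by linarith [hτ.1] : 0 < t + τ))
    (fun τ hτ ↦ hasDerivAt_log_survivalGE hc0 (by linarith [hτ.1] : 0 < s + τ)) fun τ hτ ↦ by
      refine neg_le_neg (mul_sub_one_div_rpow_sub_one_le ?_ ?_ hd hdc)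
      · exact (one_lt_inv₀ (one_sub_exp_neg_pos_s9 (by linarith [hτ.1]))).2
          (sub_lt_self 1 (exp_pos _))
      · refine inv_anti₀ (one_sub_exp_neg_pos_s9 (by linarith [hτ.1])) ?_
        gcongr
  linarith

lemma survivalGE_mul_le_of_T_transform {a b s₁ s₂ w a' b' s₁' s₂' : ℝ} (hs₁ : 0 < s₁)
    (hs : s₁ ≤ s₂) (hb : 1 ≤ b) (hba : b ≤ a) (hw : w ∈ Icc (0 : ℝ) 1)
    (ha' : a' = w * a + (1 - w) * b) (hb' : b' = w * b + (1 - w) * a)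
    (hs₁' : s₁' = w * s₁ + (1 - w) * s₂) (hs₂' : s₂' = w * s₂ + (1 - w) * s₁) :
    survivalGE a s₁ * survivalGE b s₂ ≤ survivalGE a' s₁' * survivalGE b' s₂' := by
  wlog hw2 : 1 / 2 ≤ w generalizing w a' b' s₁' s₂'
  · rw [mul_comm (survivalGE a' s₁')]
    exact this (w := 1 - w) (a' := b') (b' := a') (s₁' := s₂') (s₂' := s₁')
      ⟨by linarith [hw.2], by linarith [hw.1]⟩ (by rw [hb']; ring)
      (by rw [ha']; ring) (by rw [hs₂']; ring) (by rw [hs₁']; ring) (by linarith)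
  obtain ⟨hw0, hw1⟩ := hw
  have hba' : b ≤ a' := by rw [ha']; nlinarith
  have hb'a' : b' ≤ a' := by rw [ha', hb']; nlinarith
  have hs₁s₂' : s₁ ≤ s₂' := by rw [hs₂']; nlinarith
  obtain ⟨δa, hδa, rfl, rfl⟩ : ∃ δ, 0 ≤ δ ∧ a = a' + δ ∧ b' = b + δ :=
    ⟨(1 - w) * (a - b), by nlinarith, by rw [ha']; ring, by rw [hb']; ring⟩
  obtain ⟨δs, hδs, rfl, rfl⟩ : ∃ δ, 0 ≤ δ ∧ s₂ = s₂' + δ ∧ s₁' = s₁ + δ :=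
    ⟨(1 - w) * (s₂ - s₁), by nlinarith, by rw [hs₂']; ring, by rw [hs₁']; ring⟩
  calc survivalGE (a' + δa) s₁ * survivalGE b (s₂' + δs)
      ≤ survivalGE a' s₁ * survivalGE (b + δa) (s₂' + δs) := by
        refine one_sub_rpow_mul_one_sub_rpow_le (one_sub_exp_neg_pos_s9 hs₁)
          (sub_le_sub_left (exp_le_exp.2 (neg_le_neg hs)) 1) (sub_lt_self 1 (exp_pos _))
          (by linarith) hba' hδa
    _ ≤ survivalGE a' (s₁ + δs) * survivalGE (b + δa) s₂' :=
        survivalGE_mul_survivalGE_le hs₁ hs₁s₂' (by linarith) hb'a' hδs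

lemma le_and_le_or_le_and_le_of_mul_sub_nonpos {a b x y : ℝ} (h : (a - b) * (x - y) ≤ 0) :
    (x ≤ y ∧ b ≤ a) ∨ (y ≤ x ∧ a ≤ b) := by
  rcases lt_trichotomy x y with hxy | rfl | hxy
  · exact Or.inl ⟨hxy.le, by nlinarith⟩
  · exact (le_total b a).imp (⟨le_rfl, ·⟩) (⟨le_rfl, ·⟩)
  · exact Or.inr ⟨hxy.le, by nlinarith⟩

theorem max_st_order_chain_majorization_general (φ θ₁ θ₂ α₁ α₂ θ₁' θ₂' α₁' α₂' w : ℝ)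
    (hθ₁ : 0 < θ₁) (hθ₂ : 0 < θ₂) (hα₁ : 1 ≤ α₁) (hα₂ : 1 ≤ α₂)
    (hT : (α₁ - α₂) * (θ₁ - θ₂) ≤ 0)
    (hw : w ∈ Set.Icc (0 : ℝ) 1)
    (hα₁' : α₁' = w * α₁ + (1 - w) * α₂) (hα₂' : α₂' = w * α₂ + (1 - w) * α₁)
    (hθ₁' : θ₁' = w * θ₁ + (1 - w) * θ₂) (hθ₂' : θ₂' = w * θ₂ + (1 - w) * θ₁) :
    ∀ x : ℝ, 0 < x →
      (1 - (1 - Real.exp (-θ₁ * x ^ (-φ))) ^ α₁) * (1 - (1 - Real.exp (-θ₂ * x ^ (-φ))) ^ α₂) ≤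
        (1 - (1 - Real.exp (-θ₁' * x ^ (-φ))) ^ α₁') *
          (1 - (1 - Real.exp (-θ₂' * x ^ (-φ))) ^ α₂') := by
  intro x hx
  have ht : 0 < x ^ (-φ) := rpow_pos_of_pos hx _
  simp only [neg_mul]
  rcases le_and_le_or_le_and_le_of_mul_sub_nonpos hT with ⟨hθ, hα⟩ | ⟨hθ, hα⟩
  · exact survivalGE_mul_le_of_T_transform (mul_pos hθ₁ ht)
      (mul_le_mul_of_nonneg_right hθ ht.le) hα₂ hα hw hα₁' hα₂'
      (by rw [hθ₁']; ring) (by rw [hθ₂']; ring)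
  · rw [mul_comm, mul_comm (1 - _ ^ α₁')]
    exact survivalGE_mul_le_of_T_transform (mul_pos hθ₂ ht)
      (mul_le_mul_of_nonneg_right hθ ht.le) hα₁ hα hw hα₂' hα₁'
      (by rw [hθ₂']; ring) (by rw [hθ₁']; ring)

theorem max_st_order_chain_majorization (φ θ₁ θ₂ α₁ α₂ θ₁' θ₂' α₁' α₂' w : ℝ)
    (hφ : 0 < φ) (hθ₁ : 0 < θ₁) (hθ₂ : 0 < θ₂) (hα₁ : 1 ≤ α₁) (hα₂ : 1 ≤ α₂)
    (hT : (α₁ - α₂) * (θ₁ - θ₂) ≤ 0)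
    (hw : w ∈ Set.Icc (0 : ℝ) 1)
    (hα₁' : α₁' = w * α₁ + (1 - w) * α₂) (hα₂' : α₂' = w * α₂ + (1 - w) * α₁)
    (hθ₁' : θ₁' = w * θ₁ + (1 - w) * θ₂) (hθ₂' : θ₂' = w * θ₂ + (1 - w) * θ₁) :
    ∀ x : ℝ, 0 < x →
      (1 - (1 - Real.exp (-θ₁ * x ^ (-φ))) ^ α₁) * (1 - (1 - Real.exp (-θ₂ * x ^ (-φ))) ^ α₂) ≤
        (1 - (1 - Real.exp (-θ₁' * x ^ (-φ))) ^ α₁') *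
          (1 - (1 - Real.exp (-θ₂' * x ^ (-φ))) ^ α₂') :=
  max_st_order_chain_majorization_general φ θ₁ θ₂ α₁ α₂ θ₁' θ₂' α₁' α₂' w hθ₁ hθ₂ hα₁ hα₂ hT hw hα₁'
    hα₂' hθ₁' hθ₂'
end

section
/- Let a = Σᵢ₌₁ⁿ αᵢ and a* = Σᵢ₌₁ⁿ αᵢ* with 0 < a ≤ a*. Then for fixed θ, φ > 0, the ratio r(x) = (a/a*)·(1-e^(-θx^(-φ)))^(a-a*) is non-decreasing in x on (0, ∞). Consequently, if X₁:ₙ and X*₁:ₙ are the minima of independent EG₂(θ, φ, αᵢ) and EG₂(θ, φ, αᵢ*) samples respectively, then X*₁:ₙ ≤_lr X₁:ₙ. -/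
/-! The density of the minimum of an EG₂(θ, φ, αᵢ) sample depends on the αᵢ only through
a = Σ αᵢ, and the two densities share the factor θ φ x^(-φ-1) e^(-θ x^(-φ)). Their ratio is
therefore r(x) = (a/a*) g(x)^(a-a*) with g(x) = 1 - e^(-θ x^(-φ)), which is positive and
decreasing in x; a nonpositive power of a positive decreasing function is increasing. -/

open Real Set

lemma one_sub_exp_neg_mul_rpow_neg_pos {θ φ x : ℝ} (hθ : 0 < θ) (hx : 0 < x) :
    0 < 1 - exp (-θ * x ^ (-φ)) := by
  have hexp : -θ * x ^ (-φ) < 0 := mul_neg_of_neg_of_pos (neg_neg_of_pos hθ) (rpow_pos_of_pos hx _)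
  linarith [exp_lt_one_iff.mpr hexp]

lemma antitoneOn_one_sub_exp_neg_mul_rpow_neg {θ φ : ℝ} (hθ : 0 ≤ θ) (hφ : 0 ≤ φ) :
    AntitoneOn (fun x : ℝ => 1 - exp (-θ * x ^ (-φ))) (Ioi 0) := by
  intro x hx y _ hxy
  have hpow : y ^ (-φ) ≤ x ^ (-φ) := rpow_le_rpow_of_nonpos hx hxy (neg_nonpos.mpr hφ)
  have hexp : -θ * x ^ (-φ) ≤ -θ * y ^ (-φ) := by nlinarith
  exact sub_le_sub_left (exp_le_exp.mpr hexp) 1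

lemma AntitoneOn.monotoneOn_const_mul_rpow_of_nonpos {s : Set ℝ} {g : ℝ → ℝ} {c p : ℝ}
    (hg : AntitoneOn g s) (hg_pos : ∀ x ∈ s, 0 < g x) (hc : 0 ≤ c) (hp : p ≤ 0) :
    MonotoneOn (fun x => c * g x ^ p) s := fun _ hx y hy hxy =>
  mul_le_mul_of_nonneg_left (rpow_le_rpow_of_nonpos (hg_pos y hy) (hg hx hy hxy) hp) hc

lemma mul_mul_rpow_sub_one_div_mul_mul_rpow_sub_one {C g : ℝ} (a a' : ℝ) (hC : C ≠ 0)
    (hg : 0 < g) :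
    C * a * g ^ (a - 1) / (C * a' * g ^ (a' - 1)) = a / a' * g ^ (a - a') := by
  rw [mul_div_mul_comm, mul_div_mul_comm, div_self hC, one_mul, ← rpow_sub hg]
  ring_nf

theorem min_lr_order_general (θ φ : ℝ) (hθ : 0 < θ) (hφ : 0 < φ)
    (a a' : ℝ) (ha0 : 0 < a) (haa : a ≤ a') :
    MonotoneOn (fun x : ℝ => a / a' * (1 - Real.exp (-θ * x ^ (-φ))) ^ (a - a'))
        (Set.Ioi (0 : ℝ)) ∧
      MonotoneOn (fun x : ℝ =>
          (θ * φ * x ^ (-φ - 1) * Real.exp (-θ * x ^ (-φ)) * a *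
              (1 - Real.exp (-θ * x ^ (-φ))) ^ (a - 1)) /
            (θ * φ * x ^ (-φ - 1) * Real.exp (-θ * x ^ (-φ)) * a' *
              (1 - Real.exp (-θ * x ^ (-φ))) ^ (a' - 1)))
        (Set.Ioi (0 : ℝ)) := by
  have hratio : MonotoneOn (fun x : ℝ => a / a' * (1 - exp (-θ * x ^ (-φ))) ^ (a - a')) (Ioi 0) :=
    (antitoneOn_one_sub_exp_neg_mul_rpow_neg hθ.le hφ.le).monotoneOn_const_mul_rpow_of_nonpos
      (fun _ hx => one_sub_exp_neg_mul_rpow_neg_pos hθ hx)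
      (div_nonneg ha0.le (ha0.trans_le haa).le) (sub_nonpos.mpr haa)
  refine ⟨hratio, hratio.congr fun x (hx : 0 < x) => ?_⟩
  have hC : θ * φ * x ^ (-φ - 1) * exp (-θ * x ^ (-φ)) ≠ 0 := by
    have := rpow_pos_of_pos hx (-φ - 1)
    positivity
  exact (mul_mul_rpow_sub_one_div_mul_mul_rpow_sub_one a a' hC
    (one_sub_exp_neg_mul_rpow_neg_pos hθ hx)).symm

theorem min_lr_order (n : ℕ) (θ φ : ℝ) (hθ : 0 < θ) (hφ : 0 < φ)
    (α α' : Fin n → ℝ) (a a' : ℝ) (ha : a = ∑ i, α i) (ha' : a' = ∑ i, α' i)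
    (ha0 : 0 < a) (haa : a ≤ a') :
    MonotoneOn (fun x : ℝ => a / a' * (1 - Real.exp (-θ * x ^ (-φ))) ^ (a - a'))
        (Set.Ioi (0 : ℝ)) ∧
      MonotoneOn (fun x : ℝ =>
          (θ * φ * x ^ (-φ - 1) * Real.exp (-θ * x ^ (-φ)) * a *
              (1 - Real.exp (-θ * x ^ (-φ))) ^ (a - 1)) /
            (θ * φ * x ^ (-φ - 1) * Real.exp (-θ * x ^ (-φ)) * a' *
              (1 - Real.exp (-θ * x ^ (-φ))) ^ (a' - 1)))
        (Set.Ioi (0 : ℝ)) :=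
  min_lr_order_general θ φ hθ hφ a a' ha0 haa
end

section
/- For fixed x > 0, θ > 0, α > 0, the function (φ₁,...,φₙ) ↦ ∏ᵢ(1-e^(-θx^(-φᵢ)))^α is Schur-concave on (0,∞)ⁿ. Consequently, if (φ₁,...,φₙ) majorizes (φ₁*,...,φₙ*), then ∏ᵢ(1-e^(-θx^(-φᵢ)))^α ≤ ∏ᵢ(1-e^(-θx^(-φᵢ*)))^α; i.e., the minimum of independent EG₂(θ, φᵢ, α) variables is smaller in the usual stochastic order than the minimum of independent EG₂(θ, φᵢ*, α) variables. -/
/-! Write `(1 - exp (-θ x^(-q)))^α = exp (G q)` with `G q = α H (log θ - q log x)` and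
`H s = log (1 - exp (-exp s))`. Since `H' s = (slope exp 0 (exp s))⁻¹` and the slopes of the
convex `exp` from `0` increase, `H` and hence `G` are concave, and the claim `∑ G φᵢ ≤ ∑ G φ'ᵢ`
is Karamata's inequality. That in turn comes from the tangent line bounds
`G a ≤ G b + G' b (a - b)` along the decreasing rearrangements of `φ` and `φ'`: the slopes
`G' b` increase along them, the prefix sums of the differences are nonnegative (majorization)
with total `0`, so Abel's inequality makes the sum of the linear terms nonpositive. -/

/-- `Majorizes a b` : the vector `a` majorizes the vector `b`. -/
def Majorizes {n : ℕ} (a b : Fin n → ℝ) : Prop :=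
  (∀ s : Finset (Fin n), ∃ t : Finset (Fin n), t.card = s.card ∧ ∑ i ∈ s, b i ≤ ∑ i ∈ t, a i) ∧
    ∑ i, a i = ∑ i, b i

open Finset Real

theorem Finset.sum_le_sum_Iic_of_antitone {ι : Type*} [LinearOrder ι] [LocallyFiniteOrderBot ι]
    {f : ι → ℝ} (hf : Antitone f) {u : Finset ι} {j : ι} (hu : #u = #(Iic j)) :
    ∑ i ∈ u, f i ≤ ∑ i ∈ Iic j, f i := by
  classical
  rw [← sum_sdiff_le_sum_sdiff]
  calc ∑ i ∈ u \ Iic j, f i ≤ #(u \ Iic j) • f j :=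
        sum_le_card_nsmul _ _ _ fun i hi ↦ hf (not_le.1 (mem_Iic.not.1 (mem_sdiff.1 hi).2)).le
    _ = #(Iic j \ u) • f j := by rw [card_sdiff_comm hu]
    _ ≤ ∑ i ∈ Iic j \ u, f i :=
        card_nsmul_le_sum _ _ _ fun i hi ↦ hf (mem_Iic.1 (mem_sdiff.1 hi).1)

theorem Finset.sum_mul_le_mul_sum_of_monotoneOn {ι : Type*} [LinearOrder ι] (s : Finset ι)
    {c e : ι → ℝ} (hc : MonotoneOn c s) (he : ∀ j ∈ s, 0 ≤ ∑ i ∈ s with i ≤ j, e i)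
    {t : ℝ} (ht : ∀ i ∈ s, c i ≤ t) :
    ∑ i ∈ s, c i * e i ≤ t * ∑ i ∈ s, e i := by
  classical
  induction s using Finset.induction_on_max generalizing t with
  | empty => simp
  | insert m s hm ih =>
    have hms : m ∉ s := fun h ↦ (hm m h).false
    have hprefix : ∀ j ∈ s, ({i ∈ insert m s | i ≤ j} : Finset ι) = {i ∈ s | i ≤ j} := by
      intro j hj
      rw [filter_insert, if_neg (not_le.2 (hm j hj))]
    have hs : ∑ i ∈ s, c i * e i ≤ c m * ∑ i ∈ s, e i :=
      ih (hc.mono (subset_insert m s)) (fun j hj ↦ hprefix j hj ▸ he j (mem_insert_of_mem hj))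
        fun i hi ↦ hc (mem_insert_of_mem hi) (mem_insert_self m s) (hm i hi).le
    have htotal : 0 ≤ ∑ i ∈ insert m s, e i := by
      simpa [filter_true_of_mem fun i hi ↦ ((mem_insert.1 hi).elim le_of_eq fun h ↦ (hm i h).le)]
        using he m (mem_insert_self m s)
    calc ∑ i ∈ insert m s, c i * e i = c m * e m + ∑ i ∈ s, c i * e i := sum_insert hms
      _ ≤ c m * ∑ i ∈ insert m s, e i := by rw [sum_insert hms]; linarith
      _ ≤ t * ∑ i ∈ insert m s, e i :=
        mul_le_mul_of_nonneg_right (ht m (mem_insert_self m s)) htotal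

theorem ConcaveOn.le_add_deriv_mul_sub {S : Set ℝ} {F : ℝ → ℝ} (hF : ConcaveOn ℝ S F)
    {b y : ℝ} (hb : b ∈ S) (hy : y ∈ S) (hd : DifferentiableAt ℝ F b) :
    F y ≤ F b + deriv F b * (y - b) := by
  rcases lt_trichotomy y b with hyb | rfl | hby
  · have := hF.deriv_le_slope hy hb hyb hd
    rw [slope_def_field, le_div_iff₀ (sub_pos.2 hyb)] at this
    linarith
  · simp
  · have := hF.slope_le_deriv hb hy hby hd
    rw [slope_def_field, div_le_iff₀ (sub_pos.2 hby)] at this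
    linarith

namespace Majorizes

variable {n : ℕ} {a b : Fin n → ℝ}

theorem sum_Iic_le (h : Majorizes a b) {σ : Equiv.Perm (Fin n)} (ha : Antitone (a ∘ σ))
    (τ : Equiv.Perm (Fin n)) (j : Fin n) :
    ∑ i ∈ Iic j, b (τ i) ≤ ∑ i ∈ Iic j, a (σ i) := by
  obtain ⟨t, ht, hbt⟩ := h.1 ((Iic j).map τ.toEmbedding)
  calc ∑ i ∈ Iic j, b (τ i) = ∑ i ∈ (Iic j).map τ.toEmbedding, b i := by
        rw [sum_map]; rfl
    _ ≤ ∑ i ∈ t, a i := hbt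
    _ = ∑ i ∈ t.map σ.symm.toEmbedding, a (σ i) := by simp [sum_map]
    _ ≤ ∑ i ∈ Iic j, a (σ i) := sum_le_sum_Iic_of_antitone ha (by simpa using ht)

theorem sum_le_sum_of_concaveOn (h : Majorizes a b) {F : ℝ → ℝ}
    (hF : ConcaveOn ℝ Set.univ F) (hFd : Differentiable ℝ F) :
    ∑ i, F (a i) ≤ ∑ i, F (b i) := by
  set σ := Tuple.sort (OrderDual.toDual ∘ a)
  set τ := Tuple.sort (OrderDual.toDual ∘ b)
  have ha : Antitone (a ∘ σ) := monotone_toDual_comp_iff.1 (Tuple.monotone_sort _)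
  have hb : Antitone (b ∘ τ) := monotone_toDual_comp_iff.1 (Tuple.monotone_sort _)
  set c : Fin n → ℝ := fun i ↦ deriv F (b (τ i))
  set e : Fin n → ℝ := fun i ↦ a (σ i) - b (τ i)
  have hc : Monotone c :=
    (antitoneOn_univ.1 (hF.antitoneOn_deriv fun x _ ↦ hFd x)).comp hb
  have he : ∑ i, e i = 0 := by
    simp only [e, sum_sub_distrib, Equiv.sum_comp σ a, Equiv.sum_comp τ b, h.2, sub_self]
  have habel : ∑ i, c i * e i ≤ 0 := by
    obtain ⟨t, ht⟩ := (Set.finite_range c).bddAbove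
    have := sum_mul_le_mul_sum_of_monotoneOn univ (hc.monotoneOn _) (e := e)
      (fun j _ ↦ by simpa [e, filter_ge_eq_Iic] using h.sum_Iic_le ha τ j)
      (fun i _ ↦ ht ⟨i, rfl⟩)
    rwa [he, mul_zero] at this
  have htangent : ∀ i, F (a (σ i)) ≤ F (b (τ i)) + c i * e i := fun i ↦
    hF.le_add_deriv_mul_sub (Set.mem_univ _) (Set.mem_univ _) (hFd _)
  calc ∑ i, F (a i) = ∑ i, F (a (σ i)) := (Equiv.sum_comp σ (F ∘ a)).symm
    _ ≤ ∑ i, (F (b (τ i)) + c i * e i) := sum_le_sum fun i _ ↦ htangent i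
    _ = ∑ i, F (b (τ i)) + ∑ i, c i * e i := sum_add_distrib
    _ ≤ ∑ i, F (b (τ i)) := by linarith
    _ = ∑ i, F (b i) := Equiv.sum_comp τ (F ∘ b)

end Majorizes

theorem one_sub_exp_neg_exp_pos (s : ℝ) : 0 < 1 - exp (-exp s) :=
  sub_pos.2 (exp_lt_one_iff.2 (neg_lt_zero.2 (exp_pos s)))

theorem antitone_exp_div_exp_exp_sub_one : Antitone fun s : ℝ ↦ exp s / (exp (exp s) - 1) := by
  have hslope : ∀ w : ℝ, 0 < w → w / (exp w - 1) = (slope exp 0 w)⁻¹ ∧ 0 < slope exp 0 w := by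
    intro w hw
    rw [slope_def_field, exp_zero, sub_zero, inv_div]
    exact ⟨rfl, div_pos (by linarith [add_one_lt_exp hw.ne']) hw⟩
  intro s t hst
  obtain ⟨hs, hs_pos⟩ := hslope _ (exp_pos s)
  obtain ⟨ht, -⟩ := hslope _ (exp_pos t)
  simp only [hs, ht]
  exact inv_anti₀ hs_pos <| convexOn_exp.slope_mono (Set.mem_univ 0)
    ⟨Set.mem_univ _, (exp_pos s).ne'⟩ ⟨Set.mem_univ _, (exp_pos t).ne'⟩ (exp_le_exp.2 hst)

theorem hasDerivAt_log_one_sub_exp_neg_exp (s : ℝ) :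
    HasDerivAt (fun s ↦ log (1 - exp (-exp s))) (exp s / (exp (exp s) - 1)) s := by
  refine ((((hasDerivAt_exp s).neg.exp).const_sub 1).log
    (one_sub_exp_neg_exp_pos s).ne').congr_deriv ?_
  simp only [Pi.neg_apply, exp_neg]
  field_simp

theorem concaveOn_log_one_sub_exp_neg_exp :
    ConcaveOn ℝ Set.univ fun s ↦ log (1 - exp (-exp s)) := by
  refine Antitone.concaveOn_univ_of_deriv
    (fun s ↦ (hasDerivAt_log_one_sub_exp_neg_exp s).differentiableAt) ?_
  rw [funext fun s ↦ (hasDerivAt_log_one_sub_exp_neg_exp s).deriv]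
  exact antitone_exp_div_exp_exp_sub_one

theorem one_sub_exp_neg_mul_rpow_eq_exp_mul_log {θ x : ℝ} (hθ : 0 < θ) (hx : 0 < x) (α q : ℝ) :
    (1 - exp (-θ * x ^ (-q))) ^ α = exp (α * log (1 - exp (-exp (log θ - log x * q)))) := by
  have hw : θ * x ^ (-q) = exp (log θ - log x * q) := by
    rw [rpow_def_of_pos hx, exp_sub, exp_log hθ, mul_neg, exp_neg, div_eq_mul_inv]
  rw [neg_mul, hw, rpow_def_of_pos (one_sub_exp_neg_exp_pos _), mul_comm]

theorem min_st_order_inner_shape_general (n : ℕ) (θ α : ℝ) (hθ : 0 < θ) (hα : 0 < α)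
    (φ φ' : Fin n → ℝ)
    (hmaj : Majorizes φ φ') :
    ∀ x : ℝ, 0 < x →
      ∏ i, (1 - Real.exp (-θ * x ^ (-(φ i)))) ^ α ≤
        ∏ i, (1 - Real.exp (-θ * x ^ (-(φ' i)))) ^ α := by
  intro x hx
  set G : ℝ → ℝ := fun q ↦ α * log (1 - exp (-exp (log θ - log x * q)))
  have hG : ConcaveOn ℝ Set.univ G :=
    (concaveOn_log_one_sub_exp_neg_exp.comp_affineMap
      (AffineMap.const ℝ ℝ (log θ) - log x • AffineMap.id ℝ ℝ)).smul hα.le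
  have hGd : Differentiable ℝ G := fun q ↦
    ((hasDerivAt_log_one_sub_exp_neg_exp _).differentiableAt.comp q (by fun_prop)).const_mul α
  simp only [one_sub_exp_neg_mul_rpow_eq_exp_mul_log hθ hx, ← exp_sum, exp_le_exp]
  exact hmaj.sum_le_sum_of_concaveOn hG hGd

theorem min_st_order_inner_shape (n : ℕ) (θ α : ℝ) (hθ : 0 < θ) (hα : 0 < α)
    (φ φ' : Fin n → ℝ) (hφ : ∀ i, 0 < φ i) (hφ' : ∀ i, 0 < φ' i)
    (hmaj : Majorizes φ φ') :
    ∀ x : ℝ, 0 < x →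
      ∏ i, (1 - Real.exp (-θ * x ^ (-(φ i)))) ^ α ≤
        ∏ i, (1 - Real.exp (-θ * x ^ (-(φ' i)))) ^ α :=
  min_st_order_inner_shape_general n θ α hθ hα φ φ' hmaj
end

section
/- Let γ(α, u) = α(1-u)u^(α-1)/(1-u^α) for α > 0 and u ∈ (0,1), and let u(θ) = 1-e^(-θx^(-φ)) for fixed x, φ > 0. If α₁ ≥ α₂ ≥ 1 and 0 < θ₁ ≤ θ₂, then γ(α₂, u(θ₂)) ≥ γ(α₁, u(θ₁)). -/
/-!
Substituting `v = u⁻¹ > 1` turns `γ(α, u)` into `α (v - 1) / (v ^ α - 1)`. Both monotonicity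
properties are then the monotonicity of secant slopes of a convex function: `(v ^ α - 1) / α` is
the slope of the convex map `α ↦ v ^ α` between `0` and `α`, and for `α ≥ 1`,
`(v ^ α - 1) / (v - 1)` is the slope of the convex map `v ↦ v ^ α` between `1` and `v`.
-/

open Real Set

noncomputable def gammaRatio (a u : ℝ) : ℝ := a * (1 - u) * u ^ (a - 1) / (1 - u ^ a)

lemma gammaRatio_eq_inv {a u : ℝ} (hu : 0 < u) :
    gammaRatio a u = a * (u⁻¹ - 1) / (u⁻¹ ^ a - 1) := by
  have hua : u ^ a ≠ 0 := (rpow_pos_of_pos hu a).ne'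
  rw [gammaRatio, inv_rpow hu.le, rpow_sub_one hu.ne', ← mul_div_mul_right _ _ (inv_ne_zero hua)]
  congr 1 <;> field_simp

lemma rpow_sub_one_div_le_rpow_sub_one_div_s18 {v a b : ℝ} (hv : 0 < v) (ha : 0 < a) (hab : a ≤ b) :
    (v ^ a - 1) / a ≤ (v ^ b - 1) / b := by
  simpa using (convexOn_rpow_left hv).secant_mono (a := 0) trivial trivial trivial
    ha.ne' (ha.trans_le hab).ne' hab

lemma rpow_sub_one_div_sub_one_le_s18 {a v w : ℝ} (ha : 1 ≤ a) (hv : 1 < v) (hvw : v ≤ w) :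
    (v ^ a - 1) / (v - 1) ≤ (w ^ a - 1) / (w - 1) := by
  have hw : 1 < w := hv.trans_le hvw
  simpa using (convexOn_rpow ha).secant_mono (a := 1) (by simp) (by simp; linarith)
    (by simp; linarith) hv.ne' hw.ne' hvw

lemma gammaRatio_antitoneOn_left {u : ℝ} (hu : u ∈ Ioo 0 1) :
    AntitoneOn (gammaRatio · u) (Ioi 0) := by
  intro a₂ ha₂ a₁ _ ha
  have hv : 1 < u⁻¹ := one_lt_inv₀ hu.1 |>.mpr hu.2
  have hslope : 0 < (u⁻¹ ^ a₂ - 1) / a₂ :=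
    div_pos (sub_pos.mpr (one_lt_rpow hv ha₂)) ha₂
  dsimp only
  rw [gammaRatio_eq_inv hu.1, gammaRatio_eq_inv hu.1, mul_comm a₁, mul_comm a₂,
    ← div_div_eq_mul_div, ← div_div_eq_mul_div]
  exact div_le_div_of_nonneg_left (sub_pos.mpr hv).le hslope
    (rpow_sub_one_div_le_rpow_sub_one_div_s18 (by linarith) ha₂ ha)

lemma gammaRatio_monotoneOn_right {a : ℝ} (ha : 1 ≤ a) :
    MonotoneOn (gammaRatio a) (Ioo 0 1) := by
  intro u₁ hu₁ u₂ hu₂ hu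
  have hv₂ : 1 < u₂⁻¹ := one_lt_inv₀ hu₂.1 |>.mpr hu₂.2
  have hslope : 0 < (u₂⁻¹ ^ a - 1) / (u₂⁻¹ - 1) :=
    div_pos (sub_pos.mpr (one_lt_rpow hv₂ (by linarith))) (sub_pos.mpr hv₂)
  rw [gammaRatio_eq_inv hu₁.1, gammaRatio_eq_inv hu₂.1, ← div_div_eq_mul_div,
    ← div_div_eq_mul_div]
  exact div_le_div_of_nonneg_left (by linarith) hslope
    (rpow_sub_one_div_sub_one_le_s18 ha hv₂ (inv_anti₀ hu₁.1 hu))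

lemma one_sub_exp_neg_mul_mem_Ioo {t m : ℝ} (ht : 0 < t) (hm : 0 < m) :
    1 - exp (-t * m) ∈ Ioo 0 1 := by
  have h : exp (-t * m) < 1 := exp_lt_one_iff.mpr (by nlinarith)
  constructor <;> linarith [exp_pos (-t * m)]

lemma one_sub_exp_neg_mul_monotone {m : ℝ} (hm : 0 ≤ m) :
    Monotone fun t => 1 - exp (-t * m) := by
  intro s t hst
  have := exp_le_exp.mpr (by nlinarith : -t * m ≤ -s * m)
  simp only
  linarith

theorem gamma_combined_monotonicity_general (x φ θ₁ θ₂ α₁ α₂ : ℝ) (hx : 0 < x)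
    (hθ₁ : 0 < θ₁) (hθ : θ₁ ≤ θ₂) (hα₂ : 1 ≤ α₂) (hα : α₂ ≤ α₁) :
    let γ : ℝ → ℝ → ℝ := fun a u => a * (1 - u) * u ^ (a - 1) / (1 - u ^ a)
    let u : ℝ → ℝ := fun t => 1 - Real.exp (-t * x ^ (-φ))
    γ α₁ (u θ₁) ≤ γ α₂ (u θ₂) := by
  intro γ u
  have hm : 0 < x ^ (-φ) := rpow_pos_of_pos hx _
  have hu₁ : u θ₁ ∈ Ioo 0 1 := one_sub_exp_neg_mul_mem_Ioo hθ₁ hm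
  have hu₂ : u θ₂ ∈ Ioo 0 1 := one_sub_exp_neg_mul_mem_Ioo (hθ₁.trans_le hθ) hm
  have hα₂₀ : α₂ ∈ Ioi 0 := zero_lt_one.trans_le hα₂
  calc γ α₁ (u θ₁) ≤ γ α₂ (u θ₁) :=
        gammaRatio_antitoneOn_left hu₁ hα₂₀ (hα₂₀.out.trans_le hα) hα
    _ ≤ γ α₂ (u θ₂) :=
        gammaRatio_monotoneOn_right hα₂ hu₁ hu₂ (one_sub_exp_neg_mul_monotone hm.le hθ)

theorem gamma_combined_monotonicity (x φ θ₁ θ₂ α₁ α₂ : ℝ) (hx : 0 < x) (hφ : 0 < φ)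
    (hθ₁ : 0 < θ₁) (hθ : θ₁ ≤ θ₂) (hα₂ : 1 ≤ α₂) (hα : α₂ ≤ α₁) :
    let γ : ℝ → ℝ → ℝ := fun a u => a * (1 - u) * u ^ (a - 1) / (1 - u ^ a)
    let u : ℝ → ℝ := fun t => 1 - Real.exp (-t * x ^ (-φ))
    γ α₁ (u θ₁) ≤ γ α₂ (u θ₂) :=
  gamma_combined_monotonicity_general x φ θ₁ θ₂ α₁ α₂ hx hθ₁ hθ hα₂ hα
end
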